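/- Let V be a finite-dimensional real vector space and let K be a GL(V)-invariant cone of algebraic curvature tensors on V (T ∈ K and B ∈ GL(V) imply T_B ∈ K, where T_B(v₁,v₂,v₃,v₄) := T(Bv₁,Bv₂,Bv₃,Bv₄)). Let Θ ∈ K and let Υ be a linear functional on the space of algebraic curvature tensors with Υ(T) ≤ Υ(Θ) for every T ∈ K. Then for every symmetric positive semidefinite bilinear form g on V* (a possibly degenerate 'cometric'), Υ(F(Θ,g)) = 0, where in any basis F(Θ,g)_{abcd} := −g^{αβ}[Θ_{αbcd}Θ_{aβ} + Θ_{aαcd}Θ_{bβ} + Θ_{abαd}Θ_{cβ} + Θ_{abcα}Θ_{dβ}] with Θ_{ab} := g^{cd}Θ_{acbd} (all repeated indices summed). -/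

import Mathlib

/-!
Statement 8 (observation following Lemma 3.2 of the paper): if `K` is a `GL(V)`-invariant
cone of algebraic curvature tensors, `Θ ∈ K`, and `Υ` is a supporting linear functional of
`K` at `Θ`, then for every symmetric positive semidefinite bilinear form `g` on `V*`,
`Υ(F(Θ,g)) = 0`, where `F` is the quadratic (3.4) of the paper.
Here `V = ℝ^d` and curvature tensors are described by their components in the standard basis.
-/

noncomputable section

open Matrix

/-- `Θ` (given by its components in a basis) is an algebraic curvature tensor:
antisymmetry in the first and last pairs, symmetry under exchange of the two pairs,
and the first Bianchi identity. -/
def IsCurv {d : ℕ} (Θ : Fin d → Fin d → Fin d → Fin d → ℝ) : Prop :=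
  (∀ a b c e, Θ b a c e = -Θ a b c e) ∧
  (∀ a b c e, Θ a b e c = -Θ a b c e) ∧
  (∀ a b c e, Θ c e a b = Θ a b c e) ∧
  (∀ a b c e, Θ a b c e + Θ b c a e + Θ c a b e = 0)

/-- The space `Sym²_B(Λ²V*)` of algebraic curvature tensors on `V = ℝ^d`,
described by components in the standard basis. -/
def curvSpace (d : ℕ) : Submodule ℝ (Fin d → Fin d → Fin d → Fin d → ℝ) where
  carrier := {Θ | IsCurv Θ}
  add_mem' := by
    rintro A B ⟨hA1, hA2, hA3, hA4⟩ ⟨hB1, hB2, hB3, hB4⟩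
    refine ⟨fun a b c e => ?_, fun a b c e => ?_, fun a b c e => ?_, fun a b c e => ?_⟩ <;>
      simp only [Pi.add_apply]
    · rw [hA1, hB1]; ring
    · rw [hA2, hB2]; ring
    · rw [hA3, hB3]
    · linarith [hA4 a b c e, hB4 a b c e]
  zero_mem' := by
    refine ⟨fun a b c e => ?_, fun a b c e => ?_, fun a b c e => ?_, fun a b c e => ?_⟩ <;> simp
  smul_mem' := by
    rintro r A ⟨hA1, hA2, hA3, hA4⟩
    refine ⟨fun a b c e => ?_, fun a b c e => ?_, fun a b c e => ?_, fun a b c e => ?_⟩ <;>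
      simp only [Pi.smul_apply, smul_eq_mul]
    · rw [hA1]; ring
    · rw [hA2]; ring
    · rw [hA3]
    · linear_combination r * hA4 a b c e

/-- The first-variation tensor `D_AΘ(v₁,v₂,v₃,v₄) = Θ(Av₁,v₂,v₃,v₄) + Θ(v₁,Av₂,v₃,v₄)
+ Θ(v₁,v₂,Av₃,v₄) + Θ(v₁,v₂,v₃,Av₄)`, in components. -/
def DAfun {d : ℕ} (A : Matrix (Fin d) (Fin d) ℝ) (Θ : Fin d → Fin d → Fin d → Fin d → ℝ) :
    Fin d → Fin d → Fin d → Fin d → ℝ :=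
  fun a b c e => ∑ f, (A f a * Θ f b c e + A f b * Θ a f c e + A f c * Θ a b f e + A f e * Θ a b c f)

lemma DAfun_mem {d : ℕ} (A : Matrix (Fin d) (Fin d) ℝ) {Θ : Fin d → Fin d → Fin d → Fin d → ℝ}
    (hΘ : IsCurv Θ) : DAfun A Θ ∈ curvSpace d := by
  obtain ⟨h1, h2, h3, h4⟩ := hΘ
  refine ⟨fun a b c e => ?_, fun a b c e => ?_, fun a b c e => ?_, fun a b c e => ?_⟩
  · show DAfun A Θ b a c e = -DAfun A Θ a b c e
    unfold DAfun
    rw [← Finset.sum_neg_distrib]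
    refine Finset.sum_congr rfl fun f _ => ?_
    linear_combination A f b * h1 a f c e + A f a * h1 f b c e + A f c * h1 a b f e
      + A f e * h1 a b c f
  · show DAfun A Θ a b e c = -DAfun A Θ a b c e
    unfold DAfun
    rw [← Finset.sum_neg_distrib]
    refine Finset.sum_congr rfl fun f _ => ?_
    linear_combination A f a * h2 f b c e + A f b * h2 a f c e + A f e * h2 a b c f
      + A f c * h2 a b f e
  · show DAfun A Θ c e a b = DAfun A Θ a b c e
    unfold DAfun
    refine Finset.sum_congr rfl fun f _ => ?_
    linear_combination A f c * h3 a b f e + A f e * h3 a b c f + A f a * h3 f b c e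
      + A f b * h3 a f c e
  · show DAfun A Θ a b c e + DAfun A Θ b c a e + DAfun A Θ c a b e = 0
    unfold DAfun
    rw [← Finset.sum_add_distrib, ← Finset.sum_add_distrib]
    refine Finset.sum_eq_zero fun f _ => ?_
    linear_combination A f a * h4 f b c e + A f b * h4 f c a e + A f c * h4 f a b e
      + A f e * h4 a b c f

/-- The pullback `T_B(v₁,v₂,v₃,v₄) = T(Bv₁,Bv₂,Bv₃,Bv₄)`, in components. -/
def pullQ {d : ℕ} (B : Matrix (Fin d) (Fin d) ℝ) (Θ : Fin d → Fin d → Fin d → Fin d → ℝ) :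
    Fin d → Fin d → Fin d → Fin d → ℝ :=
  fun a b c e => ∑ p, ∑ q, ∑ r, ∑ s, B p a * B q b * B r c * B s e * Θ p q r s

/-- `D_AΘ` as an element of the curvature space. -/
def DAcurv {d : ℕ} (A : Matrix (Fin d) (Fin d) ℝ) (Θ : curvSpace d) : curvSpace d :=
  ⟨DAfun A (Θ : Fin d → Fin d → Fin d → Fin d → ℝ), DAfun_mem A Θ.2⟩


/-- The Ricci-type contraction `Θ_{ab} = g^{ce} Θ_{acbe}`. -/
def ctr {d : ℕ} (Θ : Fin d → Fin d → Fin d → Fin d → ℝ) (g : Matrix (Fin d) (Fin d) ℝ)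
    (a b : Fin d) : ℝ :=
  ∑ c, ∑ e, g c e * Θ a c b e

/-- The quadratic `F(Θ,g)` of (3.4) of the paper:
`F_{abcd} = -g^{αβ}[Θ_{αbcd}Θ_{aβ} + Θ_{aαcd}Θ_{bβ} + Θ_{abαd}Θ_{cβ} + Θ_{abcα}Θ_{dβ}]`,
where `Θ_{ab} = g^{cd}Θ_{acbd}`. -/
def Ffun {d : ℕ} (Θ : Fin d → Fin d → Fin d → Fin d → ℝ) (g : Matrix (Fin d) (Fin d) ℝ) :
    Fin d → Fin d → Fin d → Fin d → ℝ :=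
  fun a b c e => -∑ α, ∑ β, g α β *
    (Θ α b c e * ctr Θ g a β + Θ a α c e * ctr Θ g b β
      + Θ a b α e * ctr Θ g c β + Θ a b c α * ctr Θ g e β)

lemma Ffun_isCurv {d : ℕ} {Θ : Fin d → Fin d → Fin d → Fin d → ℝ}
    (hΘ : IsCurv Θ) (g : Matrix (Fin d) (Fin d) ℝ) : IsCurv (Ffun Θ g) := by
  obtain ⟨h1, h2, h3, h4⟩ := hΘ
  refine ⟨fun a b c e => ?_, fun a b c e => ?_, fun a b c e => ?_, fun a b c e => ?_⟩
  · show Ffun Θ g b a c e = -Ffun Θ g a b c e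
    unfold Ffun
    rw [neg_neg]
    simp only [← Finset.sum_neg_distrib]
    refine Finset.sum_congr rfl fun α _ => Finset.sum_congr rfl fun β _ => ?_
    linear_combination (-(g α β * ctr Θ g b β)) * h1 a α c e
      + (-(g α β * ctr Θ g a β)) * h1 α b c e
      + (-(g α β * ctr Θ g c β)) * h1 a b α e
      + (-(g α β * ctr Θ g e β)) * h1 a b c α
  · show Ffun Θ g a b e c = -Ffun Θ g a b c e
    unfold Ffun
    rw [neg_neg]
    simp only [← Finset.sum_neg_distrib]
    refine Finset.sum_congr rfl fun α _ => Finset.sum_congr rfl fun β _ => ?_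
    linear_combination (-(g α β * ctr Θ g a β)) * h2 α b c e
      + (-(g α β * ctr Θ g b β)) * h2 a α c e
      + (-(g α β * ctr Θ g e β)) * h2 a b c α
      + (-(g α β * ctr Θ g c β)) * h2 a b α e
  · show Ffun Θ g c e a b = Ffun Θ g a b c e
    unfold Ffun
    rw [neg_inj]
    refine Finset.sum_congr rfl fun α _ => Finset.sum_congr rfl fun β _ => ?_
    linear_combination (g α β * ctr Θ g c β) * h3 a b α e
      + (g α β * ctr Θ g e β) * h3 a b c α
      + (g α β * ctr Θ g a β) * h3 α b c e
      + (g α β * ctr Θ g b β) * h3 a α c e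
  · show Ffun Θ g a b c e + Ffun Θ g b c a e + Ffun Θ g c a b e = 0
    unfold Ffun
    rw [← neg_add, ← neg_add, neg_eq_zero]
    rw [← Finset.sum_add_distrib, ← Finset.sum_add_distrib]
    refine Finset.sum_eq_zero fun α _ => ?_
    rw [← Finset.sum_add_distrib, ← Finset.sum_add_distrib]
    refine Finset.sum_eq_zero fun β _ => ?_
    linear_combination (g α β * ctr Θ g a β) * h4 α b c e
      + (g α β * ctr Θ g b β) * h4 α c a e
      + (g α β * ctr Θ g c β) * h4 α a b e
      + (g α β * ctr Θ g e β) * h4 a b c α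

/-- `F(Θ,g)` as an element of the curvature space. -/
def Fcurv {d : ℕ} (Θ : curvSpace d) (g : Matrix (Fin d) (Fin d) ℝ) : curvSpace d :=
  ⟨Ffun (Θ : Fin d → Fin d → Fin d → Fin d → ℝ) g, Ffun_isCurv Θ.2 g⟩


/-! ### Auxiliary lemmas -/

section Aux

variable {d : ℕ}

lemma sum_swap4 {ι : Type*} [Fintype ι] (f : ι → ι → ι → ι → ℝ) :
    ∑ p, ∑ q, ∑ r, ∑ s, f p q r s = ∑ r, ∑ s, ∑ p, ∑ q, f p q r s := by
  have h : ∀ (g : ι → ι → ℝ), ∑ p, ∑ q, g p q = ∑ x : ι × ι, g x.1 x.2 :=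
    fun g => (Finset.sum_product' _ _ _).symm
  rw [h (fun p q => ∑ r, ∑ s, f p q r s), h (fun r s => ∑ p, ∑ q, f p q r s)]
  rw [show (∑ x : ι × ι, ∑ r, ∑ s, f x.1 x.2 r s) = ∑ x : ι × ι, ∑ y : ι × ι, f x.1 x.2 y.1 y.2 from
    Finset.sum_congr rfl fun x _ => h _]
  rw [show (∑ y : ι × ι, ∑ p, ∑ q, f p q y.1 y.2) = ∑ y : ι × ι, ∑ x : ι × ι, f x.1 x.2 y.1 y.2 from
    Finset.sum_congr rfl fun y _ => h _]
  exact Finset.sum_comm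

lemma sum_rot3 {ι : Type*} [Fintype ι] (f : ι → ι → ι → ℝ) :
    ∑ p, ∑ q, ∑ r, f p q r = ∑ q, ∑ r, ∑ p, f p q r := by
  rw [Finset.sum_comm]
  exact Finset.sum_congr rfl fun q _ => Finset.sum_comm

lemma pullQ_isCurv (B : Matrix (Fin d) (Fin d) ℝ)
    {Θ : Fin d → Fin d → Fin d → Fin d → ℝ} (hΘ : IsCurv Θ) : IsCurv (pullQ B Θ) := by
  obtain ⟨h1, h2, h3, h4⟩ := hΘ
  refine ⟨fun a b c e => ?_, fun a b c e => ?_, fun a b c e => ?_, fun a b c e => ?_⟩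
  · show pullQ B Θ b a c e = -pullQ B Θ a b c e
    unfold pullQ
    rw [Finset.sum_comm, ← Finset.sum_neg_distrib]
    refine Finset.sum_congr rfl fun p _ => ?_
    rw [← Finset.sum_neg_distrib]
    refine Finset.sum_congr rfl fun q _ => ?_
    rw [← Finset.sum_neg_distrib]
    refine Finset.sum_congr rfl fun r _ => ?_
    rw [← Finset.sum_neg_distrib]
    refine Finset.sum_congr rfl fun s _ => ?_
    · linear_combination (B p a * B q b * B r c * B s e) * h1 p q r s
  · show pullQ B Θ a b e c = -pullQ B Θ a b c e
    unfold pullQ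
    rw [← Finset.sum_neg_distrib]
    refine Finset.sum_congr rfl fun p _ => ?_
    rw [← Finset.sum_neg_distrib]
    refine Finset.sum_congr rfl fun q _ => ?_
    rw [Finset.sum_comm, ← Finset.sum_neg_distrib]
    refine Finset.sum_congr rfl fun r _ => ?_
    rw [← Finset.sum_neg_distrib]
    refine Finset.sum_congr rfl fun s _ => ?_
    · linear_combination (B p a * B q b * B r c * B s e) * h2 p q r s
  · show pullQ B Θ c e a b = pullQ B Θ a b c e
    unfold pullQ
    rw [sum_swap4 (fun p q r s => B p c * B q e * B r a * B s b * Θ p q r s)]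
    refine Finset.sum_congr rfl fun p _ => Finset.sum_congr rfl fun q _ =>
      Finset.sum_congr rfl fun r _ => Finset.sum_congr rfl fun s _ => ?_
    linear_combination (B p a * B q b * B r c * B s e) * h3 p q r s
  · show pullQ B Θ a b c e + pullQ B Θ b c a e + pullQ B Θ c a b e = 0
    unfold pullQ
    rw [(sum_rot3 (fun r p q => ∑ s, B p b * B q c * B r a * B s e * Θ p q r s)).symm,
        sum_rot3 (fun p q r => ∑ s, B p c * B q a * B r b * B s e * Θ p q r s)]
    rw [← Finset.sum_add_distrib, ← Finset.sum_add_distrib]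
    refine Finset.sum_eq_zero fun p _ => ?_
    rw [← Finset.sum_add_distrib, ← Finset.sum_add_distrib]
    refine Finset.sum_eq_zero fun q _ => ?_
    rw [← Finset.sum_add_distrib, ← Finset.sum_add_distrib]
    refine Finset.sum_eq_zero fun r _ => ?_
    rw [← Finset.sum_add_distrib, ← Finset.sum_add_distrib]
    refine Finset.sum_eq_zero fun s _ => ?_
    linear_combination (B p a * B q b * B r c * B s e) * h4 p q r s

lemma pullQ_one (Θ : Fin d → Fin d → Fin d → Fin d → ℝ) : pullQ (1 : Matrix (Fin d) (Fin d) ℝ) Θ = Θ := by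
  funext a b c e
  simp [pullQ, Matrix.one_apply, ite_mul, mul_ite, one_mul, mul_one, zero_mul, mul_zero,
    Finset.sum_ite_eq, Finset.sum_ite_eq']

lemma hu_aux (c0 k : ℝ) : HasDerivAt (fun t : ℝ => c0 + t * k) k 0 := by
  simpa using ((hasDerivAt_id (0:ℝ)).mul_const k).const_add c0

lemma hasDerivAt_pull_comp (A : Matrix (Fin d) (Fin d) ℝ)
    (Θ : Fin d → Fin d → Fin d → Fin d → ℝ) (a b c e : Fin d) :
    HasDerivAt (fun t : ℝ => pullQ (1 + t • A) Θ a b c e) (DAfun A Θ a b c e) 0 := by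
  have key : ∀ p q r s : Fin d, HasDerivAt
      (fun t : ℝ => ((if p = a then (1:ℝ) else 0) + t * A p a)
        * ((if q = b then (1:ℝ) else 0) + t * A q b)
        * ((if r = c then (1:ℝ) else 0) + t * A r c)
        * ((if s = e then (1:ℝ) else 0) + t * A s e) * Θ p q r s)
      ((A p a * (if q = b then (1:ℝ) else 0) * (if r = c then (1:ℝ) else 0) * (if s = e then (1:ℝ) else 0)
        + (if p = a then (1:ℝ) else 0) * A q b * (if r = c then (1:ℝ) else 0) * (if s = e then (1:ℝ) else 0)
        + (if p = a then (1:ℝ) else 0) * (if q = b then (1:ℝ) else 0) * A r c * (if s = e then (1:ℝ) else 0)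
        + (if p = a then (1:ℝ) else 0) * (if q = b then (1:ℝ) else 0) * (if r = c then (1:ℝ) else 0) * A s e)
        * Θ p q r s) 0 := by
    intro p q r s
    have h := ((((hu_aux (if p = a then (1:ℝ) else 0) (A p a)).mul
      (hu_aux (if q = b then (1:ℝ) else 0) (A q b))).mul
      (hu_aux (if r = c then (1:ℝ) else 0) (A r c))).mul
      (hu_aux (if s = e then (1:ℝ) else 0) (A s e))).mul_const (Θ p q r s)
    refine h.congr_deriv ?_
    simp only [Pi.mul_apply, zero_mul, add_zero]
    ring
  have hfun : (fun t : ℝ => pullQ (1 + t • A) Θ a b c e) = fun t : ℝ =>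
      ∑ p, ∑ q, ∑ r, ∑ s, ((if p = a then (1:ℝ) else 0) + t * A p a)
        * ((if q = b then (1:ℝ) else 0) + t * A q b)
        * ((if r = c then (1:ℝ) else 0) + t * A r c)
        * ((if s = e then (1:ℝ) else 0) + t * A s e) * Θ p q r s := by
    funext t
    simp [pullQ, Matrix.add_apply, Matrix.smul_apply, Matrix.one_apply, smul_eq_mul]
  have hval : (∑ p, ∑ q, ∑ r, ∑ s,
      (A p a * (if q = b then (1:ℝ) else 0) * (if r = c then (1:ℝ) else 0) * (if s = e then (1:ℝ) else 0)
        + (if p = a then (1:ℝ) else 0) * A q b * (if r = c then (1:ℝ) else 0) * (if s = e then (1:ℝ) else 0)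
        + (if p = a then (1:ℝ) else 0) * (if q = b then (1:ℝ) else 0) * A r c * (if s = e then (1:ℝ) else 0)
        + (if p = a then (1:ℝ) else 0) * (if q = b then (1:ℝ) else 0) * (if r = c then (1:ℝ) else 0) * A s e)
        * Θ p q r s) = DAfun A Θ a b c e := by
    simp [DAfun, add_mul, Finset.sum_add_distrib, ite_mul, mul_ite, one_mul, mul_one,
      zero_mul, mul_zero, Finset.sum_ite_eq, Finset.sum_ite_eq']
  rw [hfun, ← hval]
  refine HasDerivAt.fun_sum fun p _ => ?_
  refine HasDerivAt.fun_sum fun q _ => ?_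
  refine HasDerivAt.fun_sum fun r _ => ?_
  exact HasDerivAt.fun_sum fun s _ => key p q r s

/-- `F(Θ,g) = -D_AΘ` for `A^α_a = g^{αβ}Θ_{aβ}`. -/
lemma Ffun_eq_neg_DAfun (Θ : Fin d → Fin d → Fin d → Fin d → ℝ) (g : Matrix (Fin d) (Fin d) ℝ) :
    Ffun Θ g = fun a b c e =>
      -(DAfun (Matrix.of fun α x => ∑ β, g α β * ctr Θ g x β) Θ a b c e) := by
  funext a b c e
  unfold Ffun DAfun
  rw [neg_inj]
  simp only [Matrix.of_apply, Finset.sum_mul, ← Finset.sum_add_distrib]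
  refine Finset.sum_congr rfl fun α _ => Finset.sum_congr rfl fun β _ => ?_
  ring

/-- For any matrix `A`, a supporting functional kills `D_AΘ`. -/
lemma supporting_kills_DA
    (d : ℕ) (K : Set (curvSpace d))
    (hK : ∀ T ∈ K, ∀ B : Matrix (Fin d) (Fin d) ℝ, IsUnit B.det →
      ∀ T' : curvSpace d,
        (T' : Fin d → Fin d → Fin d → Fin d → ℝ)
          = pullQ B (T : Fin d → Fin d → Fin d → Fin d → ℝ) → T' ∈ K)
    (Θ : curvSpace d) (hΘ : Θ ∈ K)
    (Υ : curvSpace d →ₗ[ℝ] ℝ) (hΥ : ∀ T ∈ K, Υ T ≤ Υ Θ)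
    (A : Matrix (Fin d) (Fin d) ℝ) : Υ (DAcurv A Θ) = 0 := by
  obtain ⟨Υ', hΥ'⟩ := LinearMap.exists_extend Υ
  have hΥ'eq : ∀ T : curvSpace d, Υ' (T : Fin d → Fin d → Fin d → Fin d → ℝ) = Υ T :=
    fun T => LinearMap.congr_fun hΥ' T
  set f : ℝ → ℝ := fun t => Υ' (pullQ (1 + t • A) (Θ : Fin d → Fin d → Fin d → Fin d → ℝ))
    with hf
  have hP : HasDerivAt (fun t : ℝ => pullQ (1 + t • A) (Θ : Fin d → Fin d → Fin d → Fin d → ℝ))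
      (DAfun A (Θ : Fin d → Fin d → Fin d → Fin d → ℝ)) 0 := by
    rw [hasDerivAt_pi]; intro a
    rw [hasDerivAt_pi]; intro b
    rw [hasDerivAt_pi]; intro c
    rw [hasDerivAt_pi]; intro e
    exact hasDerivAt_pull_comp A _ a b c e
  have hderiv : HasDerivAt f (Υ' (DAfun A (Θ : Fin d → Fin d → Fin d → Fin d → ℝ))) 0 := by
    have := ((LinearMap.toContinuousLinearMap Υ').hasFDerivAt
      (x := pullQ (1 + (0:ℝ) • A) (Θ : Fin d → Fin d → Fin d → Fin d → ℝ))).comp_hasDerivAt 0 hP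
    exact this
  have hmax : IsLocalMax f 0 := by
    have hc : Continuous fun t : ℝ => (1 + t • A).det := by
      exact (continuous_const.add (continuous_id.smul continuous_const)).matrix_det
    have h1 : Filter.Tendsto (fun t : ℝ => (1 + t • A).det) (nhds 0) (nhds 1) := by
      simpa using hc.tendsto (0:ℝ)
    have hdet : ∀ᶠ t : ℝ in nhds 0, IsUnit (1 + t • A).det := by
      filter_upwards [h1.eventually_ne one_ne_zero] with t ht
      exact isUnit_iff_ne_zero.mpr ht
    refine hdet.mono fun t ht => ?_
    have hmem : (⟨pullQ (1 + t • A) (Θ : Fin d → Fin d → Fin d → Fin d → ℝ),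
        pullQ_isCurv _ Θ.2⟩ : curvSpace d) ∈ K := hK Θ hΘ _ ht _ rfl
    have h2 : f t = Υ (⟨pullQ (1 + t • A) (Θ : Fin d → Fin d → Fin d → Fin d → ℝ),
        pullQ_isCurv _ Θ.2⟩ : curvSpace d) := by
      exact hΥ'eq ⟨pullQ (1 + t • A) (Θ : Fin d → Fin d → Fin d → Fin d → ℝ),
        pullQ_isCurv _ Θ.2⟩
    have h3 : f 0 = Υ Θ := by
      rw [hf]
      simp only [zero_smul, add_zero, pullQ_one]
      exact hΥ'eq Θ
    rw [h2, h3]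
    exact hΥ _ hmem
  have hzero := hmax.hasDerivAt_eq_zero hderiv
  calc Υ (DAcurv A Θ) = Υ' (DAfun A (Θ : Fin d → Fin d → Fin d → Fin d → ℝ)) := (hΥ'eq _).symm
    _ = 0 := hzero

end Aux

/-- **Observation following Lemma 3.2 of the paper**: let `K` be a `GL(V)`-invariant cone of
algebraic curvature tensors, `Θ ∈ K`, and `Υ` a linear functional on the space of algebraic
curvature tensors with `Υ(T) ≤ Υ(Θ)` for all `T ∈ K`. Then for every symmetric positive
semidefinite bilinear form `g` on `V*` (a possibly degenerate cometric), `Υ(F(Θ,g)) = 0`. -/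
theorem supporting_functional_vanishes_on_F
    (d : ℕ) (K : Set (curvSpace d))
    (hK : ∀ T ∈ K, ∀ B : Matrix (Fin d) (Fin d) ℝ, IsUnit B.det →
      ∀ T' : curvSpace d,
        (T' : Fin d → Fin d → Fin d → Fin d → ℝ)
          = pullQ B (T : Fin d → Fin d → Fin d → Fin d → ℝ) → T' ∈ K)
    (Θ : curvSpace d) (hΘ : Θ ∈ K)
    (Υ : curvSpace d →ₗ[ℝ] ℝ) (hΥ : ∀ T ∈ K, Υ T ≤ Υ Θ)
    (g : Matrix (Fin d) (Fin d) ℝ) (hg : g.PosSemidef) :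
    Υ (Fcurv Θ g) = 0 := by
  have hA : Fcurv Θ g = -DAcurv (Matrix.of fun α x =>
      ∑ β, g α β * ctr (Θ : Fin d → Fin d → Fin d → Fin d → ℝ) g x β) Θ := by
    apply Subtype.ext
    show Ffun (Θ : Fin d → Fin d → Fin d → Fin d → ℝ) g = _
    rw [Ffun_eq_neg_DAfun]
    rfl
  rw [hA, map_neg, supporting_kills_DA d K hK Θ hΘ Υ hΥ, neg_zero]


end
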